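/- Let P = P(n,2) be the generalized Petersen graph with n divisible by 5, and let G = L(P) be its line graph with vertices x_i, y_i, z_i corresponding to edges v_i v_{i+1}, v_i u_i, u_i u_{i+2}. Then χ(G²) = 5, witnessed by coloring x_i, y_{i+3}, z_{i+2} with color r whenever i ≡ r (mod 5). -/

import Mathlib

open SimpleGraph

/-- The square of a graph: vertices at distance at most 2 are adjacent. -/
def square {V : Type*} (G : SimpleGraph V) : SimpleGraph V where
  Adj u v := u ≠ v ∧ (G.Adj u v ∨ ∃ w, G.Adj u w ∧ G.Adj w v)
  symm := by
    constructor
    rintro u v ⟨h, h2 | ⟨w, hw1, hw2⟩⟩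
    · exact ⟨h.symm, Or.inl h2.symm⟩
    · exact ⟨h.symm, Or.inr ⟨w, hw2.symm, hw1.symm⟩⟩
  loopless := ⟨fun u h => h.1 rfl⟩

/-- The line graph of the (multi)graph whose edges are indexed by `E` with
endpoints given by `ends`: two distinct edges are adjacent iff they share an
endpoint. -/
def lineOf {E V : Type*} (ends : E → V × V) : SimpleGraph E where
  Adj a b := a ≠ b ∧ ((ends a).1 = (ends b).1 ∨ (ends a).1 = (ends b).2 ∨
    (ends a).2 = (ends b).1 ∨ (ends a).2 = (ends b).2)
  symm := by
    constructor
    rintro a b ⟨h, h2 | h2 | h2 | h2⟩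
    · exact ⟨h.symm, Or.inl h2.symm⟩
    · exact ⟨h.symm, Or.inr (Or.inr (Or.inl h2.symm))⟩
    · exact ⟨h.symm, Or.inr (Or.inl h2.symm)⟩
    · exact ⟨h.symm, Or.inr (Or.inr (Or.inr h2.symm))⟩
  loopless := ⟨fun a h => h.1 rfl⟩

/-- The endpoints of the edges of the generalized Petersen graph `P(n,k)`:
`x_i = v_i v_{i+1}`, `y_i = v_i u_i`, `z_i = u_i u_{i+k}` (outer vertices `v`
in the left summand, inner vertices `u` in the right summand). -/
def petersenEnds (n k : ℕ) :
    ZMod n ⊕ ZMod n ⊕ ZMod n → (ZMod n ⊕ ZMod n) × (ZMod n ⊕ ZMod n)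
  | .inl i => (.inl i, .inl (i + 1))
  | .inr (.inl i) => (.inl i, .inr i)
  | .inr (.inr i) => (.inr i, .inr (i + (k : ZMod n)))

/-- The line graph of `P(n,k)`. -/
def LP (n k : ℕ) : SimpleGraph (ZMod n ⊕ ZMod n ⊕ ZMod n) :=
  lineOf (petersenEnds n k)

/-
Colour `x_i`, `y_i`, `z_i` by `i`, `i + 2`, `i + 3` mod 5. Every edge of `P(n,2)` together with
its four neighbouring edges receives all five colours, i.e. each closed neighbourhood of
`L(P)` is rainbow. Two vertices at distance at most 2 in `L(P)` lie in a common closed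
neighbourhood, so the colouring is proper on `L(P)²`; conversely each closed neighbourhood
is a 5-clique of `L(P)²`.
-/

namespace SimpleGraph

variable {V : Type*} {G : SimpleGraph V}

variable (G) in
def closedNeighborSet (v : V) : Set V := insert v (G.neighborSet v)

theorem mem_closedNeighborSet {v w : V} : w ∈ G.closedNeighborSet v ↔ w = v ∨ G.Adj v w :=
  Iff.rfl

theorem square_adj_iff {a b : V} :
    (square G).Adj a b ↔ a ≠ b ∧ ∃ w, a ∈ G.closedNeighborSet w ∧ b ∈ G.closedNeighborSet w := by
  simp only [square, mem_closedNeighborSet, and_congr_right_iff]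
  intro hab
  constructor
  · rintro (h | ⟨w, haw, hwb⟩)
    · exact ⟨a, .inl rfl, .inr h⟩
    · exact ⟨w, .inr haw.symm, .inr hwb⟩
  · rintro ⟨w, rfl | haw, rfl | hwb⟩
    · exact absurd rfl hab
    · exact .inl hwb
    · exact .inl haw.symm
    · exact .inr ⟨w, haw.symm, hwb⟩

theorem ne_of_square_adj_of_injOn {α : Type*} {c : V → α}
    (hc : ∀ w, Set.InjOn c (G.closedNeighborSet w)) {a b : V} (h : (square G).Adj a b) :
    c a ≠ c b := by
  obtain ⟨hab, w, ha, hb⟩ := square_adj_iff.1 h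
  exact fun hcab => hab (hc w ha hb hcab)

theorem card_le_chromaticNumber_square {ι : Type*} {f : ι → V} (hf : Function.Injective f)
    {w : V} (hfw : Set.range f ⊆ G.closedNeighborSet w) :
    Nat.card ι ≤ (square G).chromaticNumber :=
  le_chromaticNumber_of_pairwise_adj le_rfl f fun _ _ hij =>
    square_adj_iff.2 ⟨hf.ne hij, w, hfw ⟨_, rfl⟩, hfw ⟨_, rfl⟩⟩

theorem chromaticNumber_square_eq_card {α : Type*} [Fintype α] {c : V → α}
    (hc : ∀ w, Set.InjOn c (G.closedNeighborSet w)) {f : α → V} (hf : Function.Injective f)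
    {w : V} (hfw : Set.range f ⊆ G.closedNeighborSet w) :
    (square G).chromaticNumber = Fintype.card α := by
  have hcol : (square G).Colorable (Fintype.card α) :=
    (Coloring.mk c fun h => ne_of_square_adj_of_injOn hc h).colorable
  refine le_antisymm hcol.chromaticNumber_le ?_
  simpa only [Nat.card_eq_fintype_card] using card_le_chromaticNumber_square hf hfw

end SimpleGraph

section PetersenTwo

variable {n : ℕ}

def petersenColor (h5 : 5 ∣ n) : ZMod n ⊕ ZMod n ⊕ ZMod n → ZMod 5
  | .inl i => ZMod.castHom h5 (ZMod 5) i
  | .inr (.inl i) => ZMod.castHom h5 (ZMod 5) i - 3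
  | .inr (.inr i) => ZMod.castHom h5 (ZMod 5) i - 2

/-- `closedNbhdEnum w d` is the edge at distance at most 1 from `w` in `L(P(n,2))` whose colour
is `petersenColor w + d`. -/
def closedNbhdEnum : ZMod n ⊕ ZMod n ⊕ ZMod n → ZMod 5 → ZMod n ⊕ ZMod n ⊕ ZMod n
  | .inl i => ![.inl i, .inl (i + 1), .inr (.inl i), .inr (.inl (i + 1)), .inl (i - 1)]
  | .inr (.inl i) => ![.inr (.inl i), .inr (.inr i), .inl (i - 1), .inl i, .inr (.inr (i - 2))]
  | .inr (.inr i) =>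
      ![.inr (.inr i), .inr (.inl (i + 2)), .inr (.inr (i + 2)), .inr (.inr (i - 2)), .inr (.inl i)]

theorem petersenColor_closedNbhdEnum (h5 : 5 ∣ n) (w : ZMod n ⊕ ZMod n ⊕ ZMod n) (d : ZMod 5) :
    petersenColor h5 (closedNbhdEnum w d) = petersenColor h5 w + d := by
  rcases w with i | i | i <;> fin_cases d <;>
    simp only [petersenColor, closedNbhdEnum, Fin.zero_eta, Fin.mk_one, Fin.reduceFinMk,
      Matrix.cons_val_zero, Matrix.cons_val_one, Matrix.cons_val, map_add, map_sub, map_one,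
      map_ofNat] <;>
    generalize ZMod.castHom h5 (ZMod 5) i = p <;> revert p <;> decide

theorem closedNbhdEnum_injective (h5 : 5 ∣ n) (w : ZMod n ⊕ ZMod n ⊕ ZMod n) :
    Function.Injective (closedNbhdEnum w) := fun d d' h => by
  simpa only [petersenColor_closedNbhdEnum, add_right_inj] using congrArg (petersenColor h5) h

theorem closedNbhdEnum_mem (w : ZMod n ⊕ ZMod n ⊕ ZMod n) (d : ZMod 5) :
    closedNbhdEnum w d ∈ (LP n 2).closedNeighborSet w := by
  by_cases h : closedNbhdEnum w d = w
  · exact .inl h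
  refine .inr ⟨Ne.symm h, ?_⟩
  rcases w with i | i | i <;> fin_cases d <;> simp [closedNbhdEnum, petersenEnds]

theorem exists_closedNbhdEnum_eq {w b : ZMod n ⊕ ZMod n ⊕ ZMod n}
    (hb : b ∈ (LP n 2).closedNeighborSet w) : ∃ d, closedNbhdEnum w d = b := by
  rcases hb with rfl | ⟨-, h⟩
  · exact ⟨0, by rcases b with _ | _ | _ <;> rfl⟩
  rcases w with i | i | i <;> rcases b with j | j | j <;>
    simp only [petersenEnds, add_left_inj, Sum.inl.injEq, Sum.inr.injEq, reduceCtorEq,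
      Nat.cast_ofNat, or_false, false_or, or_self] at h
  · rcases h with rfl | rfl | rfl | rfl
    exacts [⟨0, rfl⟩, ⟨4, by simp [closedNbhdEnum]⟩, ⟨1, rfl⟩, ⟨0, rfl⟩]
  · rcases h with rfl | rfl
    exacts [⟨2, rfl⟩, ⟨3, rfl⟩]
  · rcases h with rfl | rfl
    exacts [⟨3, rfl⟩, ⟨2, by simp [closedNbhdEnum]⟩]
  · obtain rfl := h
    exact ⟨0, rfl⟩
  · rcases h with rfl | rfl
    exacts [⟨1, rfl⟩, ⟨4, by simp [closedNbhdEnum]⟩]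
  · rcases h with rfl | rfl
    exacts [⟨4, rfl⟩, ⟨1, rfl⟩]
  · rcases h with rfl | rfl | rfl | rfl
    exacts [⟨0, rfl⟩, ⟨3, by simp [closedNbhdEnum]⟩, ⟨2, rfl⟩, ⟨0, rfl⟩]

theorem petersenColor_injOn_closedNeighborSet (h5 : 5 ∣ n) (w : ZMod n ⊕ ZMod n ⊕ ZMod n) :
    Set.InjOn (petersenColor h5) ((LP n 2).closedNeighborSet w) := by
  rintro _ ha _ hb hab
  obtain ⟨d, rfl⟩ := exists_closedNbhdEnum_eq ha
  obtain ⟨d', rfl⟩ := exists_closedNbhdEnum_eq hb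
  rw [petersenColor_closedNbhdEnum, petersenColor_closedNbhdEnum, add_right_inj] at hab
  rw [hab]

end PetersenTwo

theorem stmt10_general (n : ℕ) (h5 : (5 : ℕ) ∣ n) :
    (square (LP n 2)).chromaticNumber = 5 ∧
    (∀ ⦃a b⦄, (square (LP n 2)).Adj a b →
      (fun e => match e with
        | Sum.inl i => ZMod.castHom h5 (ZMod 5) i
        | Sum.inr (Sum.inl i) => ZMod.castHom h5 (ZMod 5) i - 3
        | Sum.inr (Sum.inr i) => ZMod.castHom h5 (ZMod 5) i - 2) a ≠
      (fun e => match e with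
        | Sum.inl i => ZMod.castHom h5 (ZMod 5) i
        | Sum.inr (Sum.inl i) => ZMod.castHom h5 (ZMod 5) i - 3
        | Sum.inr (Sum.inr i) => ZMod.castHom h5 (ZMod 5) i - 2) b) := by
  have hinj := petersenColor_injOn_closedNeighborSet h5
  refine ⟨?_, fun _ _ h => ne_of_square_adj_of_injOn hinj h⟩
  simpa only [ZMod.card, Nat.cast_ofNat] using
    chromaticNumber_square_eq_card hinj (closedNbhdEnum_injective h5 (.inl 0))
      (Set.range_subset_iff.2 (closedNbhdEnum_mem (.inl 0)))

/-- For `5 ∣ n`, the square of the line graph of `P(n,2)` has chromatic number 5,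
witnessed by coloring `x_i`, `y_{i+3}`, `z_{i+2}` with color `r ≡ i (mod 5)`. -/
theorem stmt10 (n : ℕ) (hn : 0 < n) (h5 : (5 : ℕ) ∣ n) :
    (square (LP n 2)).chromaticNumber = 5 ∧
    (∀ ⦃a b⦄, (square (LP n 2)).Adj a b →
      (fun e => match e with
        | Sum.inl i => ZMod.castHom h5 (ZMod 5) i
        | Sum.inr (Sum.inl i) => ZMod.castHom h5 (ZMod 5) i - 3
        | Sum.inr (Sum.inr i) => ZMod.castHom h5 (ZMod 5) i - 2) a ≠
      (fun e => match e with
        | Sum.inl i => ZMod.castHom h5 (ZMod 5) i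
        | Sum.inr (Sum.inl i) => ZMod.castHom h5 (ZMod 5) i - 3
        | Sum.inr (Sum.inr i) => ZMod.castHom h5 (ZMod 5) i - 2) b) :=
  stmt10_general n h5
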